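/- arXiv:2404.04784 — 3 statements merged into one kernel-verified Lean document; each statement's English description precedes it below -/
import Mathlib

section
/- If a group G is finitely generated by n elements, then its Alexander invariant B(G) = G'/G'' is a finitely generated module over the group ring ℤ[G_ab]; in fact it is generated by at most n(n-1)/2 elements. -/
open scoped commutatorElement

/-!
The commutator subgroup of a group generated by `T` is the normal closure of the commutators
`⁅s, t⁆` with `s, t ∈ T`: modulo that normal closure the generators commute, so the quotient is
abelian. Since `⁅t, s⁆ = ⁅s, t⁆⁻¹` and `⁅s, s⁆ = 1`, one commutator per unordered pair of
distinct generators suffices, which gives `n.choose 2 = n * (n - 1) / 2` normal generators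
of `G'`, hence of `G' / G''`.
-/

namespace Subgroup

variable {G : Type*} [Group G]

theorem commutator_le_of_closure_eq_top {T : Set G} (hT : closure T = ⊤) {N : Subgroup G}
    [N.Normal] (hTN : ∀ s ∈ T, ∀ t ∈ T, ⁅s, t⁆ ∈ N) : _root_.commutator G ≤ N := by
  refine Normal.quotient_commutative_iff_commutator_le.mp ⟨⟨fun x y => ?_⟩⟩
  have hgen : closure (QuotientGroup.mk' N '' T) = ⊤ := by
    rw [← MonoidHom.map_closure, hT, ← MonoidHom.range_eq_map,
      MonoidHom.range_eq_top_of_surjective _ (QuotientGroup.mk'_surjective N)]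
  have := isMulCommutative_closure (k := QuotientGroup.mk' N '' T) <| by
    rintro _ ⟨s, hs, rfl⟩ _ ⟨t, ht, rfl⟩
    rw [← commutatorElement_eq_one_iff_mul_comm, ← map_commutatorElement,
      QuotientGroup.mk'_apply, QuotientGroup.eq_one_iff]
    exact hTN s hs t ht
  exact setLike_mul_comm (hgen ▸ mem_top x) (hgen ▸ mem_top y)

end Subgroup

namespace Sym2

variable {G : Type*} [Group G]

noncomputable def outCommutator (z : Sym2 G) : G :=
  ⁅z.out.1, z.out.2⁆

theorem commutatorElement_mem_zpowers_outCommutator (a b : G) :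
    ⁅a, b⁆ ∈ Subgroup.zpowers (outCommutator s(a, b)) := by
  have hout : s((s(a, b) : Sym2 G).out.1, (s(a, b) : Sym2 G).out.2) = s((a, b).1, (a, b).2) :=
    Quot.out_eq _
  rcases mk_eq_mk_iff.mp hout with h | h <;> rw [outCommutator, h]
  · exact Subgroup.mem_zpowers _
  · rw [Prod.fst_swap, Prod.snd_swap, ← commutatorElement_inv, Subgroup.zpowers_inv]
    exact Subgroup.mem_zpowers _

end Sym2

theorem Finset.exists_commutators_card_le_choose_two {G : Type*} [Group G] (T : Finset G) :
    ∃ S : Finset G, (S : Set G) ⊆ commutatorSet G ∧ S.card ≤ T.card.choose 2 ∧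
      ∀ s ∈ T, ∀ t ∈ T, ⁅s, t⁆ ∈ Subgroup.closure (S : Set G) := by
  classical
  refine ⟨(T.offDiag.image Sym2.mk.uncurry).image Sym2.outCommutator, ?_, ?_, ?_⟩
  · intro x hx
    obtain ⟨z, -, rfl⟩ := Finset.mem_image.mp hx
    exact commutator_mem_commutatorSet _ _
  · exact Finset.card_image_le.trans (Sym2.card_image_offDiag T).le
  · intro s hs t ht
    by_cases hst : s = t
    · simp [hst]
    refine Subgroup.zpowers_le_of_mem (Subgroup.subset_closure ?_)
      (Sym2.commutatorElement_mem_zpowers_outCommutator s t)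
    exact Finset.mem_image_of_mem _
      (Finset.mem_image_of_mem _ (Finset.mem_offDiag.mpr ⟨hs, ht, hst⟩))

/-- If `G` is generated by `n` elements, then the Alexander invariant `B(G) = G'/G''` is a
finitely generated `ℤ[G_ab]`-module, generated by at most `n(n-1)/2` elements.  Expressed
group-theoretically: there are at most `n(n-1)/2` elements of `G'` such that `G'` is
generated by `G''` together with all `G`-conjugates of these elements (i.e. the classes of
these elements generate `G'/G''` over `ℤ[G_ab]`, the abelianization acting by conjugation). -/
theorem stmt5 {G : Type*} [Group G] (n : ℕ) (T : Finset G) (hcard : T.card = n)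
    (hT : Subgroup.closure (T : Set G) = ⊤) :
    ∃ S : Finset G, (S : Set G) ⊆ (derivedSeries G 1 : Subgroup G) ∧
      S.card ≤ n * (n - 1) / 2 ∧
      Subgroup.closure ((derivedSeries G 2 : Subgroup G) ∪
        {y : G | ∃ g : G, ∃ x ∈ S, y = g * x * g⁻¹}) = derivedSeries G 1 := by
  obtain ⟨S, hS_comm, hS_card, hS_gen⟩ := T.exists_commutators_card_le_choose_two
  have hS_sub : (S : Set G) ⊆ derivedSeries G 1 := by
    rw [derivedSeries_one, commutator_eq_closure]
    exact hS_comm.trans Subgroup.subset_closure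
  refine ⟨S, hS_sub, by rwa [← hcard, ← Nat.choose_two_right], le_antisymm ?_ ?_⟩
  · rw [Subgroup.closure_le]
    rintro _ (hx | ⟨g, x, hx, rfl⟩)
    · exact derivedSeries_antitone G (Nat.le_succ 1) hx
    · exact (derivedSeries_normal G 1).conj_mem x (hS_sub hx) g
  · calc derivedSeries G 1 ≤ Subgroup.normalClosure (S : Set G) := by
          rw [derivedSeries_one]
          exact Subgroup.commutator_le_of_closure_eq_top hT fun s hs t ht =>
            Subgroup.closure_le_normalClosure (hS_gen s hs t ht)
      _ ≤ _ := by
          refine Subgroup.closure_mono (Set.subset_union_of_subset_right ?_ _)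
          rintro y hy
          obtain ⟨x, hx, hxy⟩ := Group.mem_conjugatesOfSet_iff.mp hy
          obtain ⟨g, rfl⟩ := isConj_iff.mp hxy
          exact ⟨g, x, hx, rfl⟩
end

section
/- Let F_n be the free group of rank n, with Alexander invariant B(F_n) identified with the kernel of the ℤ[t₁^±,...,t_n^±]-linear map Rⁿ → R sending the i-th basis vector to t_i - 1. Then B(F_n) is separated in the I-adic topology, where I = (t₁-1, ..., t_n-1): the intersection of all IᵏB(F_n) for k ≥ 1 is zero. -/
open Finsupp

/-- The Laurent polynomial ring `R = ℤ[t₁^±, …, t_n^±] = ℤ[ℤⁿ]`, realized as the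
monoid algebra of the additive group `Fin n →₀ ℤ` over `ℤ`. -/
noncomputable abbrev LaurentZn (n : ℕ) := AddMonoidAlgebra ℤ (Fin n →₀ ℤ)

/-- The monomial `t i` in `LaurentZn n`. -/
noncomputable def tvar {n : ℕ} (i : Fin n) : LaurentZn n :=
  AddMonoidAlgebra.single (Finsupp.single i 1) 1

/-- The boundary map `∂₁ : Rⁿ → R`, sending the `i`-th basis vector to `t_i - 1`. -/
noncomputable def delOne (n : ℕ) : (Fin n → LaurentZn n) →ₗ[LaurentZn n] LaurentZn n where
  toFun x := ∑ i, x i * (tvar i - 1)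
  map_add' x y := by simp [add_mul, Finset.sum_add_distrib]
  map_smul' r x := by simp [Finset.mul_sum, mul_assoc]

/-!
`ℤ[ℤⁿ]` is a finitely generated ℤ-algebra and a domain, hence a Noetherian domain, and `Rⁿ` is a
finitely generated torsion-free module over it. Krull's intersection theorem for such modules,
applied through the inclusion of the submodule `B(F_n)`, gives the claim as soon as `I` is proper,
which holds because `I` lies in the kernel of the augmentation `tᵢ ↦ 1`.
-/
section KrullIntersection

variable {R M : Type*} [CommRing R] [IsDomain R] [IsNoetherianRing R]
  [AddCommGroup M] [Module R M] [Module.IsTorsionFree R M] [Module.Finite R M]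

theorem Submodule.iInf_pow_smul_eq_bot_of_isTorsionFree {I : Ideal R} (hI : I ≠ ⊤)
    (N : Submodule R M) : ⨅ k : ℕ, I ^ k • N = ⊥ := by
  have hN : ∀ k : ℕ, I ^ k • N = (I ^ k • ⊤ : Submodule R N).map N.subtype := fun k => by
    rw [Submodule.map_smul'', Submodule.map_subtype_top]
  simp_rw [hN, ← Submodule.map_iInf _ N.injective_subtype,
    Ideal.iInf_pow_smul_eq_bot_of_isTorsionFree I hI, Submodule.map_bot]

theorem Submodule.biInf_pow_smul_eq_bot_of_isTorsionFree {I : Ideal R} (hI : I ≠ ⊤)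
    (N : Submodule R M) : ⨅ (k : ℕ) (_ : 1 ≤ k), I ^ k • N = ⊥ := by
  refine eq_bot_iff.mpr <| (Submodule.iInf_pow_smul_eq_bot_of_isTorsionFree hI N).le.trans' ?_
  exact le_iInf fun k => iInf₂_le_of_le (k + 1) (Nat.le_add_left 1 k) <|
    Submodule.smul_mono_left <| Ideal.pow_le_pow_right k.le_succ

end KrullIntersection

instance LaurentZn.isNoetherianRing (n : ℕ) : IsNoetherianRing (LaurentZn n) :=
  have : AddMonoid.FG (Fin n →₀ ℤ) :=
    AddGroup.fg_iff_addMonoid_fg.mp (Module.Finite.iff_addGroup_fg.mp inferInstance)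
  Algebra.FiniteType.isNoetherianRing ℤ (LaurentZn n)

theorem span_tvar_sub_one_ne_top (n : ℕ) :
    Ideal.span (Set.range fun i : Fin n => tvar i - 1) ≠ ⊤ := by
  let augmentation : LaurentZn n →+* ℤ := AddMonoidAlgebra.lift ℤ ℤ (Fin n →₀ ℤ) 1
  have hle : Ideal.span (Set.range fun i : Fin n => tvar i - 1) ≤ RingHom.ker augmentation := by
    rw [Ideal.span_le]
    rintro _ ⟨i, rfl⟩
    simp [augmentation, tvar, AddMonoidAlgebra.lift_single]
  exact ne_top_of_le_ne_top (RingHom.ker_ne_top augmentation) hle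

/-- The Alexander invariant `B(F_n)` of the free group of rank `n`, identified with the
kernel of the `R`-linear map `Rⁿ → R`, `e_i ↦ t_i - 1`, is separated in the `I`-adic
topology, where `I = (t₁ - 1, …, t_n - 1)` is the augmentation ideal: the intersection
of all `Iᵏ · B(F_n)` for `k ≥ 1` is zero. -/
theorem stmt10 (n : ℕ) :
    (⨅ (k : ℕ) (_ : 1 ≤ k),
      (Ideal.span (Set.range fun i : Fin n => tvar i - 1)) ^ k • LinearMap.ker (delOne n)) =
      (⊥ : Submodule (LaurentZn n) (Fin n → LaurentZn n)) :=
  Submodule.biInf_pow_smul_eq_bot_of_isTorsionFree (span_tvar_sub_one_ne_top n) _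
end

section
/- For any group G, the I-adic filtration on the Alexander invariant B(G) = G'/G'' coincides, up to a shift of 2, with the lower central series filtration on the maximal metabelian quotient G/G'': namely, Iᵏ · B(G) = γ_{k+2}(G/G'') for all k ≥ 0, where I = I(G_ab) is the augmentation ideal of ℤ[G_ab] acting on B(G) via conjugation. -/
open Subgroup
open scoped IsMulCommutative commutatorElement

instance (G : Type*) [Group G] (n : ℕ) : (derivedSeries G n).Normal :=
  derivedSeries_normal G n

/-- The maximal metabelian quotient `G/G''` of a group `G`. -/
abbrev Metab (G : Type*) [Group G] := G ⧸ derivedSeries G 2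

theorem derivedSeries_metab_two (G : Type*) [Group G] :
    derivedSeries (Metab G) 2 = ⊥ := by
  apply le_antisymm _ bot_le
  have hsurj : Function.Surjective (QuotientGroup.mk' (derivedSeries G 2)) :=
    QuotientGroup.mk'_surjective _
  refine le_trans (derivedSeries_le_map_derivedSeries hsurj 2) ?_
  rintro x ⟨k, hk, rfl⟩
  exact (Subgroup.mem_bot).mpr ((QuotientGroup.eq_one_iff k).mpr hk)

/-- The derived subgroup of `G/G''` is abelian. -/
instance commutator_metab_isCommutative (G : Type*) [Group G] :
    IsMulCommutative ↥(commutator (Metab G)) := by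
  constructor
  constructor
  rintro ⟨a, ha⟩ ⟨b, hb⟩
  have h : ⁅a, b⁆ ∈ ⁅derivedSeries (Metab G) 1, derivedSeries (Metab G) 1⁆ :=
    Subgroup.commutator_mem_commutator
      (by rwa [derivedSeries_one]) (by rwa [derivedSeries_one])
  rw [← derivedSeries_succ, derivedSeries_metab_two, Subgroup.mem_bot] at h
  ext
  exact commutatorElement_eq_one_iff_mul_comm.mp h

/-- The group ring `ℤ[G_ab]` (realized via the abelianization of `G/G''`, which is
naturally isomorphic to `G_ab`). -/
noncomputable abbrev GroupRingAb (G : Type*) [Group G] :=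
  MonoidAlgebra ℤ (Abelianization (Metab G))

/-- The Alexander invariant `B(G) = G'/G''`, realized as the derived subgroup of the
maximal metabelian quotient `G/G''`, written additively. -/
abbrev AlexInv (G : Type*) [Group G] := Additive ↥(commutator (Metab G))

/-- The augmentation ideal `I = I(G_ab) ⊆ ℤ[G_ab]`. -/
noncomputable def augIdealAb (G : Type*) [Group G] : Ideal (GroupRingAb G) :=
  RingHom.ker ((MonoidAlgebra.lift ℤ ℤ (Abelianization (Metab G)) 1)).toRingHom

/-- A module structure of `ℤ[G_ab]` on `B(G) = G'/G''` is the conjugation one. -/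
def IsConjModule (G : Type*) [Group G] [Module (GroupRingAb G) (AlexInv G)] : Prop :=
  ∀ (g : Metab G) (a : ↥(commutator (Metab G))) (h : g * ↑a * g⁻¹ ∈ commutator (Metab G)),
    (MonoidAlgebra.of ℤ (Abelianization (Metab G)) (Abelianization.of g)) •
        (Additive.ofMul a) =
      Additive.ofMul (⟨g * ↑a * g⁻¹, h⟩ : ↥(commutator (Metab G)))


/-!
Under the conjugation action, `(g - 1) • x = ⁅g, x⁆` for `g ∈ G/G''` and `x ∈ B(G)`, and
the augmentation ideal `I` is spanned by the elements `g - 1`. Hence, for a normal subgroup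
`N ≤ B(G)` of `G/G''`, `I • N = ⁅N, G/G''⁆`, and induction on `k` starting from
`I⁰ • B(G) = B(G) = γ₂(G/G'')` gives `Iᵏ • B(G) = γ_{k+2}(G/G'')`.
-/

namespace MonoidAlgebra

variable {k M : Type*} [CommRing k] [Monoid M]

theorem ker_lift_one_eq_span :
    RingHom.ker (lift k k M 1).toRingHom = Ideal.span (Set.range fun m => of k M m - 1) := by
  set ε := lift k k M 1
  refine le_antisymm (fun r hr => ?_) (Ideal.span_le.mpr ?_)
  · have key (r : MonoidAlgebra k M) :
        r - ε r • 1 ∈ Ideal.span (Set.range fun m => of k M m - 1) := by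
      induction r using MonoidAlgebra.induction_on with
      | of m => simpa [ε] using Ideal.subset_span (Set.mem_range_self m)
      | add f g hf hg => simpa only [map_add, add_smul, add_sub_add_comm] using add_mem hf hg
      | smul c f hf =>
        simpa only [map_smul, smul_eq_mul, mul_smul, ← smul_sub] using
          Submodule.smul_of_tower_mem _ c hf
    simpa [show ε r = 0 from hr] using key r
  · rintro _ ⟨m, rfl⟩
    simp [ε]

end MonoidAlgebra

theorem Abelianization.of_surjective {G : Type*} [Group G] :
    Function.Surjective (Abelianization.of : G →* Abelianization G) :=
  QuotientGroup.mk'_surjective _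

section AlexanderInvariant

open MonoidAlgebra

variable {G : Type*} [Group G]

theorem augIdealAb_eq_span :
    augIdealAb G = Ideal.span (Set.range fun a => of ℤ (Abelianization (Metab G)) a - 1) :=
  ker_lift_one_eq_span

theorem of_sub_one_mem_augIdealAb (a : Abelianization (Metab G)) :
    of ℤ _ a - 1 ∈ augIdealAb G :=
  augIdealAb_eq_span (G := G) ▸ Ideal.subset_span (Set.mem_range_self a)

variable [Module (GroupRingAb G) (AlexInv G)]

theorem IsConjModule.of_sub_one_smul (hconj : IsConjModule G) (g : Metab G)
    (x : ↥(commutator (Metab G))) :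
    (of ℤ _ (Abelianization.of g) - 1) • Additive.ofMul x =
      Additive.ofMul (⟨⁅g, (x : Metab G)⁆,
        commutator_mem_commutator (mem_top g) (mem_top _)⟩ : ↥(commutator (Metab G))) := by
  rw [sub_smul, one_smul, hconj g x ((commutator_normal ⊤ ⊤).conj_mem _ x.2 g), ← ofMul_div]
  congr 1
  ext
  simp [commutatorElement_def, div_eq_mul_inv]

def IsConjModule.submodule (hconj : IsConjModule G) (N : Subgroup (Metab G)) [N.Normal] :
    Submodule (GroupRingAb G) (AlexInv G) where
  __ := (N.subgroupOf (commutator (Metab G))).toAddSubgroup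
  smul_mem' c x (hx : (x.toMul : Metab G) ∈ N) :
      (((c • x).toMul : ↥(commutator (Metab G))) : Metab G) ∈ N := by
    induction c using MonoidAlgebra.induction_on with
    | of a =>
      obtain ⟨g, rfl⟩ := Abelianization.of_surjective a
      rw [show x = Additive.ofMul x.toMul from rfl,
        hconj g _ ((commutator_normal ⊤ ⊤).conj_mem _ x.toMul.2 g)]
      exact ‹N.Normal›.conj_mem _ hx g
    | add c d hc hd =>
      rw [add_smul, toMul_add, coe_mul]
      exact mul_mem hc hd
    | smul n c hc =>
      rw [smul_assoc, toMul_zsmul, coe_zpow]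
      exact zpow_mem hc n

theorem IsConjModule.mem_submodule (hconj : IsConjModule G) {N : Subgroup (Metab G)} [N.Normal]
    {x : AlexInv G} : x ∈ hconj.submodule N ↔ (x.toMul : Metab G) ∈ N :=
  Iff.rfl

theorem IsConjModule.augIdealAb_smul_submodule (hconj : IsConjModule G) (N : Subgroup (Metab G))
    [N.Normal] (hN : N ≤ commutator (Metab G)) :
    augIdealAb G • hconj.submodule N = hconj.submodule ⁅N, ⊤⁆ := by
  apply le_antisymm
  · rw [augIdealAb_eq_span, Submodule.span_smul_eq]
    refine Submodule.set_smul_le _ _ _ fun r x hr hx => ?_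
    obtain ⟨a, rfl⟩ := hr
    obtain ⟨g, rfl⟩ := Abelianization.of_surjective a
    rw [show x = Additive.ofMul x.toMul from rfl, hconj.of_sub_one_smul, hconj.mem_submodule,
      commutator_comm]
    exact commutator_mem_commutator (mem_top g) hx
  · set P := augIdealAb G • hconj.submodule N
    suffices h : ⁅N, ⊤⁆ ≤
        (AddSubgroup.toSubgroup' P.toAddSubgroup).map (commutator (Metab G)).subtype by
      intro x hx
      obtain ⟨y, hy, hyx⟩ := h hx
      rwa [Subtype.ext hyx] at hy
    rw [commutator_comm, commutator_le]
    intro g _ n hn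
    refine ⟨⟨⁅g, n⁆, commutator_mem_commutator (mem_top g) (mem_top n)⟩, ?_, rfl⟩
    change Additive.ofMul _ ∈ P
    rw [← hconj.of_sub_one_smul g ⟨n, hN hn⟩]
    exact Submodule.smul_mem_smul (of_sub_one_mem_augIdealAb _) hn

theorem IsConjModule.augIdealAb_pow_smul_top (hconj : IsConjModule G) (k : ℕ) :
    (augIdealAb G ^ k • ⊤ : Submodule (GroupRingAb G) (AlexInv G)) =
      hconj.submodule (Subgroup.lowerCentralSeries ⊤ (k + 1)) := by
  induction k with
  | zero =>
    rw [pow_zero, Ideal.one_eq_top, Submodule.top_smul, eq_comm, eq_top_iff]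
    intro x _
    rw [hconj.mem_submodule, top_lowerCentralSeries_one]
    exact x.toMul.2
  | succ k ih =>
    rw [pow_succ', Submodule.mul_smul, ih, hconj.augIdealAb_smul_submodule _
      (Subgroup.lowerCentralSeries_antitone ⊤ (Nat.le_add_left 1 k))]
    rfl

end AlexanderInvariant

/-- The paper's `γ_{k+2}` (with `γ₁ = G`) is `lowerCentralSeries ⊤ (k + 1)` in Mathlib. -/
theorem stmt18 (G : Type*) [Group G] [Module (GroupRingAb G) (AlexInv G)]
    (hconj : IsConjModule G) (k : ℕ) (a : ↥(commutator (Metab G))) :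
    Additive.ofMul a ∈ ((augIdealAb G) ^ k • ⊤ : Submodule (GroupRingAb G) (AlexInv G)) ↔
      (↑a : Metab G) ∈ Subgroup.lowerCentralSeries (⊤ : Subgroup (Metab G)) (k + 1) := by
  rw [hconj.augIdealAb_pow_smul_top]
  exact hconj.mem_submodule
end
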